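/- arXiv:0802.2834 — 5 statements merged into one kernel-verified Lean document; each statement's English description precedes it below -/
import Mathlib

section
/- Let F be a family of subsets of a finite set U with indicator function f, and fix k ≥ 1. Define c(Y) as the number of k-tuples (S₁,…,S_k) with each Sᵢ ∈ F, Sᵢ ⊆ Y, and S₁ ∪ ⋯ ∪ S_k = Y. Then for every Y ⊆ U, ∑_{X ⊆ Y} c(X) = (∑_{S ⊆ Y} f(S))^k, i.e. the zeta transform of the cover number equals the k-th power of the zeta transform of f. -/
/-!
A tuple of members of `F` contained in `Y` is an ordered cover of exactly one `X ⊆ Y`, namely of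
its union. Summing the cover numbers over `X ⊆ Y` therefore counts all `k`-tuples drawn from
`{S ∈ F | S ⊆ Y}`, of which there are `(∑_{S ⊆ Y} f(S))^k`.
-/

open Finset

namespace Finset

variable {α : Type*} [DecidableEq α] (ι : Type*) [Fintype ι] [DecidableEq ι]

def orderedCovers (F : Finset (Finset α)) (X : Finset α) : Finset (ι → Finset α) :=
  {t ∈ Fintype.piFinset fun _ => {S ∈ X.powerset | S ∈ F} | univ.sup t = X}

variable {ι}

theorem mem_orderedCovers {F : Finset (Finset α)} {X : Finset α} {t : ι → Finset α} :
    t ∈ orderedCovers ι F X ↔ (∀ i, t i ∈ F) ∧ (∀ i, t i ⊆ X) ∧ univ.sup t = X := by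
  simp only [orderedCovers, mem_filter, Fintype.mem_piFinset, mem_powerset, forall_and,
    and_comm, and_assoc]

theorem natCard_orderedCovers (F : Finset (Finset α)) (X : Finset α) :
    Nat.card {t : ι → Finset α // (∀ i, t i ∈ F) ∧ (∀ i, t i ⊆ X) ∧ univ.sup t = X} =
      #(orderedCovers ι F X) := by
  simp only [← mem_orderedCovers, ← Nat.card_eq_finsetCard]

theorem filter_piFinset_sup_eq {F : Finset (Finset α)} {X Y : Finset α} (hXY : X ⊆ Y) :
    {t ∈ Fintype.piFinset fun _ : ι => {S ∈ Y.powerset | S ∈ F} | univ.sup t = X} =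
      orderedCovers ι F X := by
  ext t
  simp only [mem_orderedCovers, mem_filter, Fintype.mem_piFinset, mem_powerset]
  constructor
  · rintro ⟨hmem, hsup⟩
    exact ⟨fun i => (hmem i).2, fun i => hsup ▸ le_sup (mem_univ i), hsup⟩
  · rintro ⟨hF, hsub, hsup⟩
    exact ⟨fun i => ⟨(hsub i).trans hXY, hF i⟩, hsup⟩

theorem sum_card_orderedCovers_powerset (F : Finset (Finset α)) (Y : Finset α) :
    ∑ X ∈ Y.powerset, #(orderedCovers ι F X) = #{S ∈ Y.powerset | S ∈ F} ^ Fintype.card ι := by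
  rw [← card_univ, ← prod_const, ← Fintype.card_piFinset,
    card_eq_sum_card_fiberwise (f := fun t => univ.sup t)]
  · exact sum_congr rfl fun X hX => congrArg card (filter_piFinset_sup_eq (mem_powerset.1 hX)).symm
  · intro t ht
    rw [mem_coe, Fintype.mem_piFinset] at ht
    exact mem_powerset.2 (Finset.sup_le fun i _ => mem_powerset.1 (mem_filter.1 (ht i)).1)

end Finset

theorem zeta_of_cover_number_eq_pow_general {α : Type*} [DecidableEq α]
    (F : Finset (Finset α)) (k : ℕ) (Y : Finset α) :
    ∑ X ∈ Y.powerset, Nat.card {t : Fin k → Finset α //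
        (∀ i, t i ∈ F) ∧ (∀ i, t i ⊆ X) ∧ Finset.univ.sup t = X}
    = ((Y.powerset.filter (· ∈ F)).card) ^ k := by
  simp only [natCard_orderedCovers]
  simpa using sum_card_orderedCovers_powerset (ι := Fin k) F Y

theorem zeta_of_cover_number_eq_pow {α : Type*} [Fintype α] [DecidableEq α]
    (F : Finset (Finset α)) (k : ℕ) (hk : 1 ≤ k) (Y : Finset α) :
    ∑ X ∈ Y.powerset, Nat.card {t : Fin k → Finset α //
        (∀ i, t i ∈ F) ∧ (∀ i, t i ⊆ X) ∧ Finset.univ.sup t = X}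
    = ((Y.powerset.filter (· ∈ F)).card) ^ k :=
  zeta_of_cover_number_eq_pow_general F k Y
end

section
/- (Intersection lemma of Chung, Frankl, Graham, Shearer.) Let U be a finite set and P₁,…,P_m subsets of U such that every element of U lies in at least δ of the Pℓ (δ ≥ 1). Let F be a family of subsets of U and define the projections Fℓ = { F ∩ Pℓ : F ∈ F }. Then |F|^δ ≤ ∏_{ℓ=1}^m |Fℓ|. -/
/-!
Split `F` at a point `a` into the sets avoiding `a` and the sets containing it (with `a` removed).
On every `Pℓ ∋ a` the traces of the two parts are disjoint, so their sizes add up to at most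
`|Fℓ|`; elsewhere each part has at most `|Fℓ|` traces. Induction on the ground set, together with
the superadditivity of the geometric mean over `δ` of the indices `ℓ` with `a ∈ Pℓ`, gives
`|F| ≤ ∏ |Fℓ| ^ (1/δ)`.
-/

open Finset NNReal

namespace NNReal

variable {ι : Type*}

theorem prod_rpow_add_prod_rpow_le (s : Finset ι) (w x y : ι → ℝ≥0) (hw : ∑ i ∈ s, w i = 1) :
    ∏ i ∈ s, x i ^ (w i : ℝ) + ∏ i ∈ s, y i ^ (w i : ℝ) ≤ ∏ i ∈ s, (x i + y i) ^ (w i : ℝ) := by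
  set G := ∏ i ∈ s, (x i + y i) ^ (w i : ℝ)
  -- Also valid where `x i + y i = 0`: there `u i = 0`, and `0 / 0 = 0`.
  have factor (u : ι → ℝ≥0) (hu : ∀ i, x i + y i = 0 → u i = 0) :
      ∏ i ∈ s, u i ^ (w i : ℝ) = (∏ i ∈ s, (u i / (x i + y i)) ^ (w i : ℝ)) * G := by
    rw [← prod_mul_distrib]
    refine prod_congr rfl fun i _ => ?_
    rw [← mul_rpow, div_mul_cancel_of_imp (hu i)]
  have amgm (u : ι → ℝ≥0) := geom_mean_le_arith_mean_weighted s w (fun i => u i / (x i + y i)) hw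
  calc ∏ i ∈ s, x i ^ (w i : ℝ) + ∏ i ∈ s, y i ^ (w i : ℝ)
      ≤ (∑ i ∈ s, w i * (x i / (x i + y i)) + ∑ i ∈ s, w i * (y i / (x i + y i))) * G := by
        rw [factor x fun i h => (add_eq_zero.mp h).1, factor y fun i h => (add_eq_zero.mp h).2,
          add_mul]
        gcongr
        exacts [amgm x, amgm y]
    _ ≤ (∑ i ∈ s, w i) * G := by
        rw [← sum_add_distrib]
        gcongr with i
        rw [← mul_add, ← add_div]
        exact mul_le_of_le_one_right (by positivity) (div_self_le_one _)
    _ = G := by rw [hw, one_mul]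

theorem prod_rpow_add_prod_rpow_le_of_le [Fintype ι] (s : Finset ι) (w x y z : ι → ℝ≥0)
    (hw : ∑ i ∈ s, w i = 1) (hxz : ∀ i, x i ≤ z i) (hyz : ∀ i, y i ≤ z i)
    (hxyz : ∀ i ∈ s, x i + y i ≤ z i) :
    ∏ i, x i ^ (w i : ℝ) + ∏ i, y i ^ (w i : ℝ) ≤ ∏ i, z i ^ (w i : ℝ) := by
  classical
  simp only [← prod_mul_prod_compl s]
  calc (∏ i ∈ s, x i ^ (w i : ℝ)) * ∏ i ∈ sᶜ, x i ^ (w i : ℝ)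
        + (∏ i ∈ s, y i ^ (w i : ℝ)) * ∏ i ∈ sᶜ, y i ^ (w i : ℝ)
      ≤ (∏ i ∈ s, x i ^ (w i : ℝ) + ∏ i ∈ s, y i ^ (w i : ℝ)) * ∏ i ∈ sᶜ, z i ^ (w i : ℝ) := by
        rw [add_mul]
        gcongr with i hi i hi
        exacts [hxz i, hyz i]
    _ ≤ (∏ i ∈ s, z i ^ (w i : ℝ)) * ∏ i ∈ sᶜ, z i ^ (w i : ℝ) := by
        gcongr
        refine (prod_rpow_add_prod_rpow_le s w x y hw).trans ?_
        gcongr with i hi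
        exact hxyz i hi

end NNReal

namespace Finset

variable {α : Type*} [DecidableEq α] {F : Finset (Finset α)} {P : Finset α} {a : α}

theorem image_inter_nonMemberSubfamily_subset :
    (F.nonMemberSubfamily a).image (· ∩ P) ⊆ (F.image (· ∩ P)).nonMemberSubfamily a := by
  simp only [subset_iff, mem_image, mem_nonMemberSubfamily]
  rintro _ ⟨S, ⟨hS, haS⟩, rfl⟩
  exact ⟨⟨S, hS, rfl⟩, fun h => haS (mem_inter.mp h).1⟩

theorem image_inter_memberSubfamily_subset (ha : a ∈ P) :
    (F.memberSubfamily a).image (· ∩ P) ⊆ (F.image (· ∩ P)).memberSubfamily a := by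
  simp only [subset_iff, mem_image, mem_memberSubfamily]
  rintro _ ⟨S, ⟨hS, haS⟩, rfl⟩
  exact ⟨⟨insert a S, hS, insert_inter_of_mem ha⟩, fun h => haS (mem_inter.mp h).1⟩

theorem image_inter_memberSubfamily_subset_of_notMem (ha : a ∉ P) :
    (F.memberSubfamily a).image (· ∩ P) ⊆ F.image (· ∩ P) := by
  simp only [subset_iff, mem_image, mem_memberSubfamily]
  rintro _ ⟨S, ⟨hS, -⟩, rfl⟩
  exact ⟨insert a S, hS, insert_inter_of_notMem ha⟩

theorem card_image_inter_nonMemberSubfamily_le :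
    #((F.nonMemberSubfamily a).image (· ∩ P)) ≤ #(F.image (· ∩ P)) :=
  card_le_card (image_inter_nonMemberSubfamily_subset.trans (filter_subset _ _))

theorem card_image_inter_nonMemberSubfamily_add_card_image_inter_memberSubfamily_le
    (ha : a ∈ P) :
    #((F.nonMemberSubfamily a).image (· ∩ P)) + #((F.memberSubfamily a).image (· ∩ P))
      ≤ #(F.image (· ∩ P)) := by
  rw [← card_memberSubfamily_add_card_nonMemberSubfamily a (F.image (· ∩ P)), add_comm]
  exact add_le_add (card_le_card (image_inter_memberSubfamily_subset ha))
    (card_le_card image_inter_nonMemberSubfamily_subset)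

theorem card_image_inter_memberSubfamily_le :
    #((F.memberSubfamily a).image (· ∩ P)) ≤ #(F.image (· ∩ P)) := by
  by_cases ha : a ∈ P
  · exact (Nat.le_add_left _ _).trans
      (card_image_inter_nonMemberSubfamily_add_card_image_inter_memberSubfamily_le ha)
  · exact card_le_card (image_inter_memberSubfamily_subset_of_notMem ha)

theorem card_le_prod_card_image_inter_rpow {ι : Type*} [Fintype ι] {δ : ℕ} (hδ : δ ≠ 0)
    (P : ι → Finset α) (hcov : ∀ u, δ ≤ #{ℓ | u ∈ P ℓ}) (F : Finset (Finset α)) :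
    (#F : ℝ≥0) ≤ ∏ ℓ, (#(F.image (· ∩ P ℓ)) : ℝ≥0) ^ (δ : ℝ)⁻¹ := by
  induction F using memberFamily_induction_on with
  | empty => simp
  | singleton_empty => simp
  | @subfamily a F ih₀ ih₁ =>
    obtain ⟨L, hLa, hLcard⟩ := exists_subset_card_eq (hcov a)
    have hw : ∑ _ ∈ L, (δ : ℝ≥0)⁻¹ = 1 := by
      rw [sum_const, hLcard, nsmul_eq_mul, mul_inv_cancel₀ (Nat.cast_ne_zero.mpr hδ)]
    have key := prod_rpow_add_prod_rpow_le_of_le L (fun _ => (δ : ℝ≥0)⁻¹)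
      (fun ℓ => #((F.nonMemberSubfamily a).image (· ∩ P ℓ)))
      (fun ℓ => #((F.memberSubfamily a).image (· ∩ P ℓ)))
      (fun ℓ => #(F.image (· ∩ P ℓ))) hw
      (fun ℓ => by exact_mod_cast card_image_inter_nonMemberSubfamily_le)
      (fun ℓ => by exact_mod_cast card_image_inter_memberSubfamily_le)
      (fun ℓ hℓ => by
        exact_mod_cast card_image_inter_nonMemberSubfamily_add_card_image_inter_memberSubfamily_le
          (mem_filter.mp (hLa hℓ)).2)
    push_cast at key
    rw [← card_memberSubfamily_add_card_nonMemberSubfamily a F, Nat.cast_add, add_comm]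
    exact (add_le_add ih₀ ih₁).trans key

end Finset

theorem chung_frankl_graham_shearer_general {α : Type*} [DecidableEq α]
    (m δ : ℕ) (hδ : 1 ≤ δ) (P : Fin m → Finset α)
    (hcov : ∀ u : α, δ ≤ (Finset.univ.filter (fun ℓ => u ∈ P ℓ)).card)
    (F : Finset (Finset α)) :
    F.card ^ δ ≤ ∏ ℓ : Fin m, (F.image (fun S => S ∩ P ℓ)).card := by
  have hδ₀ : δ ≠ 0 := Nat.one_le_iff_ne_zero.mp hδ
  have h := pow_le_pow_left₀ (by positivity) (card_le_prod_card_image_inter_rpow hδ₀ P hcov F) δ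
  rw [← prod_pow] at h
  simp only [rpow_inv_natCast_pow _ hδ₀] at h
  exact_mod_cast h

theorem chung_frankl_graham_shearer {α : Type*} [Fintype α] [DecidableEq α]
    (m δ : ℕ) (hδ : 1 ≤ δ) (P : Fin m → Finset α)
    (hcov : ∀ u : α, δ ≤ (Finset.univ.filter (fun ℓ => u ∈ P ℓ)).card)
    (F : Finset (Finset α)) :
    F.card ^ δ ≤ ∏ ℓ : Fin m, (F.image (fun S => S ∩ P ℓ)).card :=
  chung_frankl_graham_shearer_general m δ hδ P hcov F
end

section
/- The number of dominating sets of an n-vertex graph with maximum degree Δ is at most (2^{Δ+1} − 1)^{n/(Δ+1)}. -/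
/-!
Shearer's lemma: if every point lies in exactly `t` of the sets `C i`, then a set family `𝒜`
satisfies `#𝒜 ^ t ≤ ∏ i, #(𝒜.trace (C i))`. It is proved by splitting `𝒜` according to whether
its members contain a fixed point `a`; the two halves are recombined by the superadditivity of the
geometric mean, a consequence of AM-GM.

Cover `V` by the closed neighbourhoods `N[v]` together with `Δ - deg v` copies of each `{v}`, so
that every vertex is covered exactly `Δ + 1` times. A dominating set meets every `N[v]`, so its
trace on `N[v]` is one of the `2 ^ (deg v + 1) - 1` nonempty subsets of `N[v]`, while the trace on
`{v}` takes at most `2` values; finally `(2 ^ (d + 1) - 1) * 2 ^ (Δ - d) ≤ 2 ^ (Δ + 1) - 1`.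
-/

open Finset
open scoped NNReal

theorem NNReal.prod_rpow_add_prod_rpow_le_s6 {ι : Type*} (s : Finset ι) (w p r : ι → ℝ≥0)
    (hw : ∑ i ∈ s, w i = 1) :
    ∏ i ∈ s, p i ^ (w i : ℝ) + ∏ i ∈ s, r i ^ (w i : ℝ) ≤ ∏ i ∈ s, (p i + r i) ^ (w i : ℝ) := by
  set c := fun i => p i + r i
  have factor : ∀ x : ι → ℝ≥0, (∀ i, x i ≤ c i) →
      ∏ i ∈ s, x i ^ (w i : ℝ) = (∏ i ∈ s, c i ^ (w i : ℝ)) * ∏ i ∈ s, (x i / c i) ^ (w i : ℝ) := by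
    intro x hx
    rw [← prod_mul_distrib]
    refine prod_congr rfl fun i _ => ?_
    rw [← NNReal.mul_rpow, mul_div_cancel_of_imp']
    intro h
    exact le_antisymm (h ▸ hx i) bot_le
  rw [factor p fun i => le_self_add, factor r fun i => le_add_self, ← mul_add]
  refine mul_le_of_le_one_right' ?_
  calc ∏ i ∈ s, (p i / c i) ^ (w i : ℝ) + ∏ i ∈ s, (r i / c i) ^ (w i : ℝ)
      ≤ ∑ i ∈ s, w i * (p i / c i) + ∑ i ∈ s, w i * (r i / c i) :=
        add_le_add (NNReal.geom_mean_le_arith_mean_weighted s w _ hw)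
          (NNReal.geom_mean_le_arith_mean_weighted s w _ hw)
    _ = ∑ i ∈ s, w i * (c i / c i) := by
        rw [← sum_add_distrib]; simp only [← mul_add, ← add_div, c]
    _ ≤ ∑ i ∈ s, w i := sum_le_sum fun i _ => mul_le_of_le_one_right' (div_self_le_one _)
    _ = 1 := hw

theorem Nat.add_pow_card_le_prod_add_mul {ι : Type*} (s : Finset ι) (p r : ι → ℕ) {a b R : ℕ}
    (ha : a ^ #s ≤ (∏ i ∈ s, p i) * R) (hb : b ^ #s ≤ (∏ i ∈ s, r i) * R) :
    (a + b) ^ #s ≤ (∏ i ∈ s, (p i + r i)) * R := by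
  obtain rfl | hs := s.eq_empty_or_nonempty
  · simpa using ha
  set t := #s
  have ht : t ≠ 0 := hs.card_pos.ne'
  have root : ∀ x : ℝ≥0, (x ^ (t⁻¹ : ℝ)) ^ t = x := fun x => NNReal.rpow_inv_natCast_pow x ht
  let ρ : ℝ≥0 := R ^ (t⁻¹ : ℝ)
  let g : (ι → ℕ) → ℝ≥0 := fun x => ∏ i ∈ s, (x i : ℝ≥0) ^ (((t : ℝ≥0)⁻¹ : ℝ≥0) : ℝ)
  have g_pow : ∀ x, g x ^ t = ∏ i ∈ s, (x i : ℝ≥0) := by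
    intro x; rw [← prod_pow]; push_cast; exact prod_congr rfl fun i _ => root _
  have root_le : ∀ (c : ℕ) (x : ι → ℕ), c ^ t ≤ (∏ i ∈ s, x i) * R → (c : ℝ≥0) ≤ g x * ρ := by
    intro c x h
    refine le_of_pow_le_pow_left₀ ht (by positivity) ?_
    rw [mul_pow, g_pow, root]
    exact_mod_cast h
  have hw : ∑ _i ∈ s, (t : ℝ≥0)⁻¹ = 1 := by
    rw [sum_const, nsmul_eq_mul, mul_inv_cancel₀ (by exact_mod_cast ht)]
  have key : (a : ℝ≥0) + b ≤ g (fun i => p i + r i) * ρ :=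
    calc (a : ℝ≥0) + b ≤ g p * ρ + g r * ρ :=
          _root_.add_le_add (root_le a p ha) (root_le b r hb)
      _ = (g p + g r) * ρ := (add_mul _ _ _).symm
      _ ≤ g (fun i => p i + r i) * ρ := by
          gcongr
          simpa [g] using
            NNReal.prod_rpow_add_prod_rpow_le_s6 s _ (fun i => (p i : ℝ≥0)) (fun i => r i) hw
  have := pow_le_pow_left₀ (by positivity) key t
  rw [mul_pow, g_pow, root] at this
  exact_mod_cast this

namespace Finset
variable {α : Type*} [DecidableEq α] {𝒜 : Finset (Finset α)} {s : Finset α} {a : α}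

def trace (𝒜 : Finset (Finset α)) (s : Finset α) : Finset (Finset α) := 𝒜.image (· ∩ s)

theorem trace_mono {ℬ : Finset (Finset α)} (h : 𝒜 ⊆ ℬ) (s : Finset α) : 𝒜.trace s ⊆ ℬ.trace s :=
  image_subset_image h

theorem trace_memberSubfamily_subset (ha : a ∉ s) : (𝒜.memberSubfamily a).trace s ⊆ 𝒜.trace s := by
  simp only [trace, memberSubfamily, image_image, subset_iff, mem_image, mem_filter]
  rintro _ ⟨D, ⟨hD, -⟩, rfl⟩
  refine ⟨D, hD, ?_⟩
  ext b
  by_cases hb : b = a <;> simp_all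

theorem memberSubfamily_trace (ha : a ∈ s) :
    (𝒜.trace s).memberSubfamily a = (𝒜.memberSubfamily a).trace s := by
  ext T
  simp only [trace, memberSubfamily, image_image, mem_image, mem_filter, Function.comp_def]
  constructor
  · rintro ⟨_, ⟨⟨D, hD, rfl⟩, haD⟩, rfl⟩
    exact ⟨D, ⟨hD, (mem_inter.1 haD).1⟩, by ext b; by_cases hb : b = a <;> simp_all⟩
  · rintro ⟨D, ⟨hD, haD⟩, rfl⟩
    exact ⟨D ∩ s, ⟨⟨D, hD, rfl⟩, mem_inter.2 ⟨haD, ha⟩⟩, by ext b; by_cases hb : b = a <;> simp_all⟩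

theorem nonMemberSubfamily_trace (ha : a ∈ s) :
    (𝒜.trace s).nonMemberSubfamily a = (𝒜.nonMemberSubfamily a).trace s := by
  ext T
  simp only [trace, nonMemberSubfamily, mem_image, mem_filter]
  constructor
  · rintro ⟨⟨D, hD, rfl⟩, haD⟩
    exact ⟨D, ⟨hD, fun h => haD (mem_inter.2 ⟨h, ha⟩)⟩, rfl⟩
  · rintro ⟨D, ⟨hD, haD⟩, rfl⟩
    exact ⟨⟨D, hD, rfl⟩, fun h => haD (mem_inter.1 h).1⟩

theorem trace_subset_powerset (𝒜 : Finset (Finset α)) (s : Finset α) : 𝒜.trace s ⊆ s.powerset :=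
  image_subset_iff.2 fun _ _ => mem_powerset.2 inter_subset_right

theorem card_trace_le_two_pow (𝒜 : Finset (Finset α)) (s : Finset α) : #(𝒜.trace s) ≤ 2 ^ #s :=
  (card_le_card (trace_subset_powerset 𝒜 s)).trans_eq (card_powerset s)

theorem card_trace_le_two_pow_sub_one (h : ∀ D ∈ 𝒜, (D ∩ s).Nonempty) :
    #(𝒜.trace s) ≤ 2 ^ #s - 1 := by
  have hsub : 𝒜.trace s ⊆ s.powerset.erase ∅ := fun T hT => by
    obtain ⟨D, hD, rfl⟩ := mem_image.1 hT
    exact mem_erase.2 ⟨(h D hD).ne_empty, trace_subset_powerset 𝒜 s hT⟩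
  simpa [card_erase_of_mem] using card_le_card hsub

theorem card_trace_eq_of_mem (ha : a ∈ s) :
    #(𝒜.trace s) = #((𝒜.memberSubfamily a).trace s) + #((𝒜.nonMemberSubfamily a).trace s) := by
  rw [← memberSubfamily_trace ha, ← nonMemberSubfamily_trace ha,
    card_memberSubfamily_add_card_nonMemberSubfamily]

theorem card_pow_le_prod_card_trace {ι : Type*} [Fintype ι] (C : ι → Finset α) {t : ℕ}
    (ht : t ≠ 0) (𝒜 : Finset (Finset α)) (hC : ∀ s ∈ 𝒜, ∀ a ∈ s, #{i | a ∈ C i} = t) :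
    #𝒜 ^ t ≤ ∏ i, #(𝒜.trace (C i)) := by
  induction 𝒜 using memberFamily_induction_on with
  | empty => simp [ht]
  | singleton_empty => simp [trace]
  | @subfamily a 𝒜 ih₀ ih₁ =>
    have h₀ := ih₀ fun s hs => hC s (mem_nonMemberSubfamily.1 hs).1
    have h₁ := ih₁ fun s hs b hb => hC _ (mem_memberSubfamily.1 hs).1 b (mem_insert_of_mem hb)
    by_cases haA : ∀ s ∈ 𝒜, a ∉ s
    · rwa [nonMemberSubfamily, filter_true_of_mem haA] at h₀
    obtain ⟨s, hs, has⟩ : ∃ s ∈ 𝒜, a ∈ s := by simpa using haA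
    set I : Finset ι := {i | a ∈ C i}
    have hI : #I = t := hC s hs a has
    set R := ∏ i ∈ univ.filter (a ∉ C ·), #(𝒜.trace (C i))
    rw [← prod_filter_mul_prod_filter_not univ (a ∈ C ·), ← hI] at h₀ h₁ ⊢
    rw [← card_memberSubfamily_add_card_nonMemberSubfamily a 𝒜]
    have h₀' : #(𝒜.nonMemberSubfamily a) ^ #I ≤
        (∏ i ∈ I, #((𝒜.nonMemberSubfamily a).trace (C i))) * R :=
      h₀.trans (Nat.mul_le_mul_left _ (prod_le_prod' fun i _ =>
        card_le_card (trace_mono (filter_subset _ _) _)))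
    have h₁' : #(𝒜.memberSubfamily a) ^ #I ≤
        (∏ i ∈ I, #((𝒜.memberSubfamily a).trace (C i))) * R :=
      h₁.trans (Nat.mul_le_mul_left _ (prod_le_prod' fun i hi =>
        card_le_card (trace_memberSubfamily_subset (mem_filter.1 hi).2)))
    refine (Nat.add_pow_card_le_prod_add_mul I _ _ h₁' h₀').trans_eq ?_
    rw [prod_congr rfl fun i hi => (card_trace_eq_of_mem (mem_filter.1 hi).2).symm]

end Finset

theorem Nat.two_pow_sub_one_mul_two_pow_le (m k : ℕ) : (2 ^ m - 1) * 2 ^ k ≤ 2 ^ (m + k) - 1 := by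
  rw [Nat.sub_mul, one_mul, pow_add]
  have := Nat.one_le_two_pow (n := k)
  omega

namespace SimpleGraph
variable {V : Type*} [Fintype V] [DecidableEq V] (G : SimpleGraph V) [DecidableRel G.Adj]

def closedNeighborFinset (v : V) : Finset V := insert v (G.neighborFinset v)

theorem mem_closedNeighborFinset_comm {u v : V} :
    u ∈ G.closedNeighborFinset v ↔ v ∈ G.closedNeighborFinset u := by
  simp [closedNeighborFinset, eq_comm, G.adj_comm]

theorem card_closedNeighborFinset (v : V) : #(G.closedNeighborFinset v) = G.degree v + 1 := by
  rw [closedNeighborFinset, card_insert_of_notMem (G.notMem_neighborFinset_self v),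
    card_neighborFinset_eq_degree]

def dominatingSets : Finset (Finset V) := {D | ∀ v ∉ D, ∃ u ∈ D, G.Adj u v}

theorem inter_closedNeighborFinset_nonempty {D : Finset V} (hD : D ∈ G.dominatingSets) (v : V) :
    (D ∩ G.closedNeighborFinset v).Nonempty := by
  by_cases hv : v ∈ D
  · exact ⟨v, mem_inter.2 ⟨hv, mem_insert_self _ _⟩⟩
  · obtain ⟨u, hu, huv⟩ := (mem_filter.1 hD).2 v hv
    exact ⟨u, mem_inter.2 ⟨hu, mem_insert_of_mem (G.mem_neighborFinset v u |>.2 huv.symm)⟩⟩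

def paddedCover (Δ : ℕ) : V ⊕ (Σ v, Fin (Δ - G.degree v)) → Finset V :=
  Sum.elim G.closedNeighborFinset fun p => {p.1}

theorem card_filter_mem_paddedCover {Δ : ℕ} {u : V} (hu : G.degree u ≤ Δ) :
    #{i | u ∈ G.paddedCover Δ i} = Δ + 1 := by
  rw [card_filter, Fintype.sum_sum_type]
  simp only [paddedCover, Sum.elim_inl, Sum.elim_inr, mem_singleton, Fintype.sum_sigma]
  simp_rw [G.mem_closedNeighborFinset_comm (u := u)]
  simp [sum_boole, card_closedNeighborFinset, apply_ite]
  omega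

theorem prod_paddedCover {M : Type*} [CommMonoid M] (Δ : ℕ) (f : Finset V → M) :
    ∏ i, f (G.paddedCover Δ i) = ∏ v, f (G.closedNeighborFinset v) * f {v} ^ (Δ - G.degree v) := by
  simp [paddedCover, Fintype.prod_sum_type, Fintype.prod_sigma, prod_mul_distrib]

end SimpleGraph

theorem dominating_sets_bound {V : Type*} [Fintype V] [DecidableEq V]
    (G : SimpleGraph V) [DecidableRel G.Adj] (Δ : ℕ)
    (hdeg : ∀ v, G.degree v ≤ Δ) :
    Nat.card {D : Finset V // ∀ v ∉ D, ∃ u ∈ D, G.Adj u v} ^ (Δ + 1)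
      ≤ (2 ^ (Δ + 1) - 1) ^ (Fintype.card V) := by
  set 𝒟 := G.dominatingSets
  have h_card : Nat.card {D : Finset V // ∀ v ∉ D, ∃ u ∈ D, G.Adj u v} = #𝒟 :=
    Nat.card_eq_fintype_card.trans (Fintype.card_subtype _)
  have h_closed (v : V) : #(𝒟.trace (G.closedNeighborFinset v)) ≤ 2 ^ (G.degree v + 1) - 1 :=
    G.card_closedNeighborFinset v ▸ card_trace_le_two_pow_sub_one
      fun _ hD => G.inter_closedNeighborFinset_nonempty hD v
  have h_single (v : V) : #(𝒟.trace {v}) ≤ 2 := card_trace_le_two_pow 𝒟 {v}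
  calc Nat.card {D : Finset V // ∀ v ∉ D, ∃ u ∈ D, G.Adj u v} ^ (Δ + 1)
      = #𝒟 ^ (Δ + 1) := by rw [h_card]
    _ ≤ ∏ i, #(𝒟.trace (G.paddedCover Δ i)) :=
        card_pow_le_prod_card_trace _ Δ.succ_ne_zero 𝒟
          fun _ _ u _ => G.card_filter_mem_paddedCover (hdeg u)
    _ = ∏ v, #(𝒟.trace (G.closedNeighborFinset v)) * #(𝒟.trace {v}) ^ (Δ - G.degree v) :=
        G.prod_paddedCover Δ fun s => #(𝒟.trace s)
    _ ≤ ∏ v, (2 ^ (G.degree v + 1) - 1) * 2 ^ (Δ - G.degree v) :=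
        prod_le_prod' fun v _ => Nat.mul_le_mul (h_closed v) (Nat.pow_le_pow_left (h_single v) _)
    _ ≤ ∏ _v : V, (2 ^ (Δ + 1) - 1) := prod_le_prod' fun v _ => by
        have := Nat.two_pow_sub_one_mul_two_pow_le (G.degree v + 1) (Δ - G.degree v)
        rwa [show G.degree v + 1 + (Δ - G.degree v) = Δ + 1 by have := hdeg v; omega] at this
    _ = (2 ^ (Δ + 1) - 1) ^ Fintype.card V := by rw [prod_const, card_univ]
end

section
/- The function x ↦ log(2^x − x − 1) is concave on (1, ∞); consequently, for reals a₁,…,a_n > 1 with ∑ a_v = (Δ+1)n and Δ ≥ 1, ∏_v (2^{a_v} − a_v − 1) ≤ (2^{Δ+1} − Δ − 1)^n. -/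
/-!
A positive function `g` is log-concave where `g g'' ≤ g'²`. For `g x = b ^ x - x - 1` with
`L = log b ≥ 0` this reads `L b^x (2 - L (x + 1)) ≤ 1`; writing `b^x = e^y e^(1-L)` with
`y = L x + L - 1`, the left side is `(e^y (1 - y)) (L e^(1-L))`, a product of two factors that are
at most `1` by `1 + z ≤ e^z`. The product bound is Jensen's inequality for `log g` with uniform
weights, exponentiated.
-/

open Real Finset

lemma exp_mul_one_sub_le_one (y : ℝ) : exp y * (1 - y) ≤ 1 := by
  have h := mul_le_mul_of_nonneg_left (by linarith [add_one_le_exp (-y)] : 1 - y ≤ exp (-y))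
    (exp_pos y).le
  rwa [← exp_add, add_neg_cancel, exp_zero] at h

lemma mul_exp_one_sub_le_one (u : ℝ) : u * exp (1 - u) ≤ 1 := by
  have h := mul_le_mul_of_nonneg_left (mul_exp_neg_le_exp_neg_one u) (exp_pos 1).le
  rwa [mul_left_comm, ← exp_add, ← exp_add, add_neg_cancel, exp_zero, ← sub_eq_add_neg] at h

lemma mul_exp_mul_two_sub_sub_le_one {u : ℝ} (hu : 0 ≤ u) (t : ℝ) :
    u * exp t * (2 - u - t) ≤ 1 := by
  have hsplit : exp t = exp (t + u - 1) * exp (1 - u) := by rw [← exp_add]; ring_nf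
  rw [show u * exp t * (2 - u - t) = exp (t + u - 1) * (1 - (t + u - 1)) * (u * exp (1 - u)) by
    rw [hsplit]; ring]
  exact mul_le_one₀ (exp_mul_one_sub_le_one _) (by positivity) (mul_exp_one_sub_le_one u)

lemma concaveOn_log_of_mul_deriv2_le_sq {D : Set ℝ} (hD : Convex ℝ D) (hDo : IsOpen D)
    {g g' g'' : ℝ → ℝ} (hg : ∀ x ∈ D, HasDerivAt g (g' x) x)
    (hg' : ∀ x ∈ D, HasDerivAt g' (g'' x) x) (hpos : ∀ x ∈ D, 0 < g x)
    (hle : ∀ x ∈ D, g x * g'' x ≤ g' x ^ 2) :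
    ConcaveOn ℝ D fun x => log (g x) := by
  have hlog : ∀ x ∈ D, HasDerivAt (fun x => log (g x)) (g' x / g x) x :=
    fun x hx => (hg x hx).log (hpos x hx).ne'
  refine concaveOn_of_hasDerivWithinAt2_nonpos hD
    (f' := fun x => g' x / g x) (f'' := fun x => (g'' x * g x - g' x * g' x) / g x ^ 2)
    (fun x hx => (hlog x hx).continuousAt.continuousWithinAt) ?_ ?_ ?_ <;>
    rw [hDo.interior_eq] <;> intro x hx
  · exact (hlog x hx).hasDerivWithinAt
  · exact ((hg' x hx).div (hg x hx) (hpos x hx).ne').hasDerivWithinAt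
  · exact div_nonpos_of_nonpos_of_nonneg (by nlinarith [hle x hx]) (sq_nonneg _)

lemma add_one_lt_rpow {b x : ℝ} (hb : 2 ≤ b) (hx : 1 < x) : x + 1 < b ^ x := by
  have hbernoulli := one_add_mul_self_lt_rpow_one_add (by norm_num : (-1 : ℝ) ≤ 1) one_ne_zero hx
  rw [mul_one, add_comm, one_add_one_eq_two] at hbernoulli
  exact hbernoulli.trans_le (rpow_le_rpow zero_le_two hb (by linarith))

lemma concaveOn_log_rpow_sub_sub_one {b : ℝ} (hb : 2 ≤ b) :
    ConcaveOn ℝ (Set.Ioi 1) fun x : ℝ => log (b ^ x - x - 1) := by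
  have hb0 : 0 < b := by linarith
  have hL : 0 ≤ log b := log_nonneg (by linarith)
  refine concaveOn_log_of_mul_deriv2_le_sq (convex_Ioi 1) isOpen_Ioi
    (g' := fun x => b ^ x * log b - 1) (g'' := fun x => b ^ x * log b * log b)
    (fun x _ => ((hasStrictDerivAt_const_rpow hb0 x).hasDerivAt.sub (hasDerivAt_id x)).sub_const 1)
    (fun x _ => ((hasStrictDerivAt_const_rpow hb0 x).hasDerivAt.mul_const _).sub_const 1)
    (fun x hx => by linarith [add_one_lt_rpow hb hx]) fun x _ => ?_
  have h := mul_exp_mul_two_sub_sub_le_one hL (log b * x)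
  rw [← rpow_def_of_pos hb0] at h
  nlinarith [h]

lemma prod_le_pow_card_of_concaveOn_log {ι : Type*} {s : Finset ι} (hs : s.Nonempty)
    {D : Set ℝ} {f : ℝ → ℝ} (hf : ConcaveOn ℝ D fun x => log (f x))
    (hpos : ∀ x ∈ D, 0 < f x) {a : ι → ℝ} (ha : ∀ i ∈ s, a i ∈ D) :
    ∏ i ∈ s, f (a i) ≤ f ((∑ i ∈ s, a i) / #s) ^ #s := by
  have hcard : (0 : ℝ) < #s := by exact_mod_cast hs.card_pos
  have hw : ∑ _i ∈ s, (#s : ℝ)⁻¹ = 1 := by simp [hcard.ne']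
  have hmean : ∑ i ∈ s, (#s : ℝ)⁻¹ • a i = (∑ i ∈ s, a i) / #s := by
    rw [← smul_sum, smul_eq_mul, inv_mul_eq_div]
  have hjensen := hf.le_map_sum (fun _ _ => by positivity) hw ha
  have hmem := hf.1.sum_mem (fun _ _ => by positivity) hw ha
  rw [hmean, ← smul_sum, smul_eq_mul, inv_mul_le_iff₀ hcard] at hjensen
  rw [hmean] at hmem
  calc ∏ i ∈ s, f (a i) = exp (∑ i ∈ s, log (f (a i))) := by
        rw [exp_sum]; exact prod_congr rfl fun i hi => (exp_log (hpos _ (ha i hi))).symm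
    _ ≤ exp (#s * log (f ((∑ i ∈ s, a i) / #s))) := exp_le_exp.mpr hjensen
    _ = f ((∑ i ∈ s, a i) / #s) ^ #s := by rw [exp_nat_mul, exp_log (hpos _ hmem)]

theorem log_two_pow_sub_linear_concave_and_product_bound :
    (ConcaveOn ℝ (Set.Ioi (1 : ℝ)) fun x : ℝ => Real.log ((2 : ℝ) ^ x - x - 1)) ∧
    ∀ (n Δ : ℕ) (a : Fin n → ℝ), 1 ≤ n → 1 ≤ Δ → (∀ v, 1 < a v) →
      (∑ v, a v = ((Δ : ℝ) + 1) * n) →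
      ∏ v, ((2 : ℝ) ^ (a v) - a v - 1)
        ≤ ((2 : ℝ) ^ ((Δ : ℝ) + 1) - (Δ : ℝ) - 1) ^ n := by
  have hconc := concaveOn_log_rpow_sub_sub_one le_rfl
  refine ⟨hconc, ?_⟩
  intro n Δ a hn hΔ ha hsum
  have hne : (univ : Finset (Fin n)).Nonempty := univ_nonempty_iff.mpr ⟨⟨0, hn⟩⟩
  have hpos : ∀ x ∈ Set.Ioi (1 : ℝ), 0 < (2 : ℝ) ^ x - x - 1 :=
    fun x hx => by linarith [add_one_lt_rpow le_rfl hx]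
  have hmean : (∑ v, a v) / #(univ : Finset (Fin n)) = Δ + 1 := by
    rw [hsum, card_univ, Fintype.card_fin, mul_div_assoc, div_self (by positivity), mul_one]
  have h := prod_le_pow_card_of_concaveOn_log hne hconc hpos fun v _ => ha v
  rw [hmean, card_univ, Fintype.card_fin] at h
  have hΔ1 : (1 : ℝ) < Δ + 1 := by linarith [(Nat.one_le_cast (α := ℝ)).mpr hΔ]
  exact h.trans (pow_le_pow_left₀ (hpos _ hΔ1).le (by linarith) n)
end

section
/- Let F be a family of subsets of a finite set U, fix k ≥ 1, and for 0 ≤ s ≤ n define d^{(s)}(Y) as the number of k-tuples (S₁,…,S_k) with Sᵢ ∈ F, Sᵢ ⊆ Y, S₁ ∪ ⋯ ∪ S_k = Y, and |S₁|+⋯+|S_k| = s. Then ∑_{Y ⊆ X} d^{(s)}(Y) = ∑_{s₁+⋯+s_k = s} ∏_{i=1}^k |{S ∈ F : S ⊆ X, |S| = s}| evaluated with |S| = sᵢ in the i-th factor; that is, the zeta transform of d^{(s)} equals the s-th coefficient of the k-th power of the rank-generating zeta transform of the indicator of F. Moreover, d(Y) := d^{(|Y|)}(Y) counts the k-tuples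 from F that partition Y. -/
theorem ranked_zeta_of_partition_number {α : Type*} [Fintype α] [DecidableEq α]
    (F : Finset (Finset α)) (k : ℕ) (hk : 1 ≤ k) (s : ℕ)
    (hs : s ≤ Fintype.card α) (X : Finset α) :
    (∑ Y ∈ X.powerset, Nat.card {t : Fin k → Finset α //
          (∀ i, t i ∈ F) ∧ Finset.univ.sup t = Y ∧ (∑ i, (t i).card) = s}
      = ∑ c ∈ Finset.Nat.antidiagonalTuple k s,
          ∏ i : Fin k,
            (X.powerset.filter (fun S => S ∈ F ∧ S.card = c i)).card) ∧
    (∀ (Y : Finset α) (t : Fin k → Finset α),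
        Finset.univ.sup t = Y → (∑ i, (t i).card) = Y.card →
        ∀ i j, i ≠ j → Disjoint (t i) (t j)) := by
  constructor
  · set T : Finset (Fin k → Finset α) :=
      Finset.univ.filter (fun t => (∀ i, t i ∈ F) ∧ (∀ i, t i ⊆ X) ∧ (∑ i, (t i).card) = s)
      with hT
    have hL : ∑ Y ∈ X.powerset, Nat.card {t : Fin k → Finset α //
          (∀ i, t i ∈ F) ∧ Finset.univ.sup t = Y ∧ (∑ i, (t i).card) = s} = T.card := by
      have hfib : ∀ t ∈ T, Finset.univ.sup t ∈ X.powerset := by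
        intro t ht
        simp only [hT, Finset.mem_filter] at ht
        rw [Finset.mem_powerset]
        exact Finset.sup_le (fun i _ => ht.2.2.1 i)
      rw [Finset.card_eq_sum_card_fiberwise hfib]
      refine Finset.sum_congr rfl (fun Y hY => ?_)
      rw [Nat.card_eq_fintype_card, Fintype.card_subtype]
      congr 1
      ext t
      simp only [hT, Finset.mem_filter, Finset.mem_univ, true_and]
      constructor
      · rintro ⟨h1, h2, h3⟩
        refine ⟨⟨h1, fun i => ?_, h3⟩, h2⟩
        have hle := Finset.le_sup (f := t) (Finset.mem_univ i)
        rw [h2] at hle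
        exact hle.trans (Finset.mem_powerset.mp hY)
      · rintro ⟨⟨h1, h2, h3⟩, h4⟩
        exact ⟨h1, h4, h3⟩
    have hR : ∑ c ∈ Finset.Nat.antidiagonalTuple k s,
          ∏ i : Fin k, (X.powerset.filter (fun S => S ∈ F ∧ S.card = c i)).card = T.card := by
      have hfib : ∀ t ∈ T, (fun i => (t i).card) ∈ Finset.Nat.antidiagonalTuple k s := by
        intro t ht
        simp only [hT, Finset.mem_filter] at ht
        rw [Finset.Nat.mem_antidiagonalTuple]
        exact ht.2.2.2
      rw [Finset.card_eq_sum_card_fiberwise hfib]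
      refine Finset.sum_congr rfl (fun c hc => ?_)
      rw [← Fintype.card_piFinset]
      symm
      congr 1
      ext t
      simp only [hT, Finset.mem_filter, Finset.mem_univ, true_and, Fintype.mem_piFinset,
        Finset.mem_powerset, funext_iff]
      constructor
      · rintro ⟨⟨h1, h2, h3⟩, h4⟩ i
        exact ⟨h2 i, h1 i, h4 i⟩
      · intro h
        refine ⟨⟨fun i => (h i).2.1, fun i => (h i).1, ?_⟩, fun i => (h i).2.2⟩
        rw [Finset.sum_congr rfl (fun i _ => (h i).2.2)]
        exact Finset.Nat.mem_antidiagonalTuple.mp hc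
    rw [hL, hR]
  · intro Y t hsup hcard i j hij
    have hsub : ∀ i, t i ⊆ Y := by
      intro i
      have hle := Finset.le_sup (f := t) (Finset.mem_univ i)
      rwa [hsup] at hle
    have key : ∀ a ∈ Y, (Finset.univ.filter (fun i => a ∈ t i)).card = 1 := by
      have h1 : ∑ i, (t i).card = ∑ a ∈ Y, (Finset.univ.filter (fun i => a ∈ t i)).card := by
        have : ∀ i : Fin k, (t i).card = ∑ a ∈ Y, if a ∈ t i then 1 else 0 := by
          intro i
          rw [← Finset.card_filter]
          congr 1
          ext a
          simp only [Finset.mem_filter]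
          exact ⟨fun h => ⟨hsub i h, h⟩, fun h => h.2⟩
        rw [Finset.sum_congr rfl (fun i _ => this i), Finset.sum_comm]
        exact Finset.sum_congr rfl (fun a _ => (Finset.card_filter _ _).symm)
      have hge : ∀ a ∈ Y, 1 ≤ (Finset.univ.filter (fun i => a ∈ t i)).card := by
        intro a ha
        rw [← hsup, Finset.mem_sup] at ha
        obtain ⟨i, _, hi⟩ := ha
        rw [Nat.one_le_iff_ne_zero, Ne, Finset.card_eq_zero, Finset.eq_empty_iff_forall_notMem]
        intro h
        exact h i (Finset.mem_filter.mpr ⟨Finset.mem_univ i, hi⟩)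
      have hsum : ∑ a ∈ Y, (Finset.univ.filter (fun i => a ∈ t i)).card = ∑ a ∈ Y, 1 := by
        rw [← h1, hcard, Finset.sum_const, smul_eq_mul, mul_one]
      intro a ha
      by_contra hne
      have hlt : 1 < (Finset.univ.filter (fun i => a ∈ t i)).card :=
        lt_of_le_of_ne (hge a ha) (Ne.symm hne)
      have : ∑ a ∈ Y, 1 < ∑ a ∈ Y, (Finset.univ.filter (fun i => a ∈ t i)).card :=
        Finset.sum_lt_sum (fun b hb => hge b hb) ⟨a, ha, hlt⟩
      omega
    rw [Finset.disjoint_left]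
    intro a hai haj
    have h2 : ({i, j} : Finset (Fin k)) ⊆ Finset.univ.filter (fun i => a ∈ t i) := by
      intro x hx
      rcases Finset.mem_insert.mp hx with h | h
      · subst h; exact Finset.mem_filter.mpr ⟨Finset.mem_univ _, hai⟩
      · rw [Finset.mem_singleton.mp h]; exact Finset.mem_filter.mpr ⟨Finset.mem_univ _, haj⟩
    have := Finset.card_le_card h2
    rw [Finset.card_insert_of_notMem (by simpa using hij), Finset.card_singleton,
      key a (hsub i hai)] at this
    omega
end
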